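/- For all integers r ≥ 2, 1 ≤ ℓ ≤ r, J ≥ 0, and every integer d ≥ J + 1, one has the identity 𝒜_{(r−1)J+ℓ}(q) = Σ_{j=1}^{r} A^J_{ℓ,j,(r−1)d+j} · 𝒜_{(r−1)d+j}(q) in ℚ[[q]]. -/

import Mathlib

open PowerSeries Finset

/-- Gordon difference condition for `r`: for every `a ≥ 1`, at most `r - 1` of the parts
lie in `{a, a+1}` (equivalent to `λ_m - λ_{m+r-1} ≥ 2` for all valid `m`). -/
def GordonCond (r : ℕ) {n : ℕ} (p : Nat.Partition n) : Prop :=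
  ∀ a : ℕ, 1 ≤ a → Multiset.count a p.parts + Multiset.count (a+1) p.parts ≤ r - 1

/-- Number of partitions of `n` into parts not congruent to `0`, `c`, or `-c` modulo `2r+1`. -/
noncomputable def ACountMod (r c n : ℕ) : ℕ :=
  Nat.card {p : Nat.Partition n // ∀ x ∈ p.parts,
    (x : ZMod (2*r+1)) ≠ 0 ∧ (x : ZMod (2*r+1)) ≠ (c : ZMod (2*r+1)) ∧
      (x : ZMod (2*r+1)) ≠ -(c : ZMod (2*r+1))}

/-- The defining properties of the `𝒜`-family `(𝒜_k)_{k ≥ 1}` for `r`: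
(i) for `1 ≤ ℓ ≤ r`, the coefficient of `qⁿ` in `𝒜_ℓ` counts partitions of `n` into parts
not congruent to `0, ±(r-ℓ+1)` mod `2r+1`; (ii) `𝒜_{(r-1)g+1} = 𝒜_{(r-1)(g-1)+r}`;
(iii) `q^{g(i-1)} 𝒜_{(r-1)g+i} = 𝒜_{(r-1)(g-1)+r-i+1} - 𝒜_{(r-1)(g-1)+r-i+2}`. -/
def AFamily (r : ℕ) (A : ℕ → PowerSeries ℚ) : Prop :=
  (∀ ℓ, 1 ≤ ℓ → ℓ ≤ r → ∀ n, PowerSeries.coeff n (A ℓ) = (ACountMod r (r - ℓ + 1) n : ℚ)) ∧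
  (∀ g, 1 ≤ g → A ((r-1)*g + 1) = A ((r-1)*(g-1) + r)) ∧
  (∀ g, 1 ≤ g → ∀ i, 2 ≤ i → i ≤ r →
    (PowerSeries.X : PowerSeries ℚ)^(g*(i-1)) * A ((r-1)*g + i)
      = A ((r-1)*(g-1) + (r - i + 1)) - A ((r-1)*(g-1) + (r - i + 2)))

/-- The coefficients `A^J_{ℓ,j,(r-1)d+j}` with `d = J + 1 + e`: `coefA r ℓ J e j` is
`A^J_{ℓ,j,(r-1)(J+1+e)+j}`, defined by the initial conditions at `d = J+1` and the recursion
`A^J_{ℓ,j,(r-1)(d+1)+j} = q^{(d+1)(j-1)} Σ_{m=1}^{r-j+1} A^J_{ℓ,m,(r-1)d+m}`. -/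
noncomputable def coefA (r ℓ J : ℕ) : ℕ → ℕ → PowerSeries ℚ
  | 0, j => if j ≤ r - ℓ + 1 then (PowerSeries.X : PowerSeries ℚ) ^ ((J+1)*(j-1)) else 0
  | e+1, j => (PowerSeries.X : PowerSeries ℚ) ^ ((J+1+(e+1))*(j-1)) *
      ∑ m ∈ Finset.Icc 1 (r - j + 1), coefA r ℓ J e m

lemma telescope (r : ℕ) (hr : 2 ≤ r) (A : ℕ → PowerSeries ℚ) (hA : AFamily r A)
    (g : ℕ) (hg : 1 ≤ g) :
    ∀ t, t ≤ r - 1 →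
      A ((r-1)*(g-1) + (r - t)) =
        ∑ m ∈ Finset.Icc 1 (t+1), (PowerSeries.X : PowerSeries ℚ)^(g*(m-1)) * A ((r-1)*g + m) := by
  intro t
  induction t with
  | zero =>
    intro _
    simp only [Nat.sub_zero, Finset.Icc_self, Finset.sum_singleton, Nat.sub_self, Nat.mul_zero,
      pow_zero, one_mul]
    exact (hA.2.1 g hg).symm
  | succ t ih =>
    intro ht
    have h3 := hA.2.2 g hg (t+2) (by omega) (by omega)
    rw [show r - (t+2) + 1 = r - (t+1) from by omega,
        show r - (t+2) + 2 = r - t from by omega] at h3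
    rw [show t+1+1 = (t+1)+1 from rfl, Finset.sum_Icc_succ_top (by omega), ← ih (by omega)]
    have h4 := sub_eq_iff_eq_add.mp h3.symm
    rw [h4]
    ring_nf

/-- For `r ≥ 2`, `1 ≤ ℓ ≤ r`, `J ≥ 0`, and every `d ≥ J + 1`:
`𝒜_{(r-1)J+ℓ}(q) = Σ_{j=1}^{r} A^J_{ℓ,j,(r-1)d+j} · 𝒜_{(r-1)d+j}(q)` in `ℚ[[q]]`. -/
theorem A_coefA_recursion (r ℓ J d : ℕ) (hr : 2 ≤ r) (hl1 : 1 ≤ ℓ) (hlr : ℓ ≤ r)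
    (hd : J + 1 ≤ d) (A : ℕ → PowerSeries ℚ) (hA : AFamily r A) :
    A ((r-1)*J + ℓ) = ∑ j ∈ Finset.Icc 1 r,
      coefA r ℓ J (d - (J+1)) j * A ((r-1)*d + j) := by
  suffices h : ∀ e, A ((r-1)*J + ℓ) = ∑ j ∈ Finset.Icc 1 r,
      coefA r ℓ J e j * A ((r-1)*(J+1+e) + j) by
    have := h (d - (J+1))
    rwa [show J+1+(d-(J+1)) = d from by omega] at this
  intro e
  induction e with
  | zero =>
    have htel := telescope r hr A hA (J+1) (by omega) (r - ℓ) (by omega)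
    rw [show r - (r - ℓ) = ℓ from by omega, show J+1-1 = J from rfl] at htel
    rw [htel]
    have hfil : Finset.filter (fun j => j ≤ r - ℓ + 1) (Finset.Icc 1 r)
        = Finset.Icc 1 (r - ℓ + 1) := by
      ext m
      simp only [Finset.mem_filter, Finset.mem_Icc]
      omega
    rw [show r - ℓ + 1 = (r - ℓ) + 1 from rfl, ← hfil, Finset.sum_filter]
    apply Finset.sum_congr rfl
    intro j hj
    simp only [coefA]
    split <;> simp
  | succ e ih =>
    rw [ih]
    have step1 : ∀ j ∈ Finset.Icc 1 r, coefA r ℓ J e j * A ((r-1)*(J+1+e) + j)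
        = ∑ m ∈ Finset.Icc 1 r, if j ≤ r - m + 1 then
            coefA r ℓ J e j *
              ((PowerSeries.X : PowerSeries ℚ)^((J+1+(e+1))*(m-1)) * A ((r-1)*(J+1+(e+1)) + m))
          else 0 := by
      intro j hj
      simp only [Finset.mem_Icc] at hj
      have htel := telescope r hr A hA (J+1+(e+1)) (by omega) (r - j) (by omega)
      rw [show r - (r - j) = j from by omega, show J+1+(e+1)-1 = J+1+e from rfl,
          show r - j + 1 = (r - j) + 1 from rfl] at htel
      rw [htel, Finset.mul_sum, ← Finset.sum_filter]
      have hfil : Finset.filter (fun m => j ≤ r - m + 1) (Finset.Icc 1 r)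
          = Finset.Icc 1 (r - j + 1) := by
        ext m
        simp only [Finset.mem_filter, Finset.mem_Icc]
        omega
      rw [hfil]
    rw [Finset.sum_congr rfl step1, Finset.sum_comm]
    apply Finset.sum_congr rfl
    intro m hm
    simp only [Finset.mem_Icc] at hm
    rw [← Finset.sum_filter]
    have hfil : Finset.filter (fun j => j ≤ r - m + 1) (Finset.Icc 1 r)
        = Finset.Icc 1 (r - m + 1) := by
      ext j
      simp only [Finset.mem_filter, Finset.mem_Icc]
      omega
    rw [hfil]
    simp only [coefA]
    rw [← Finset.sum_mul]
    ring
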